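/- arXiv:2303.11246 — 7 statements merged into one kernel-verified Lean document; each statement's English description precedes it below -/
import Mathlib

section
/- Let (X, ≤) be an Esakia space and let U be a clopen upset of X. Then the following are equivalent: (i) U is regular in the Alexandrov topology of ≤, i.e. the interior of the closure of U, computed in the topology on X whose open sets are exactly the ≤-upsets, equals U; (ii) U = U**; (iii) U↓ \ U ⊆ (U*)↓ \ U*. -/
/-- The downward closure of a set in a preorder. -/
def dwn {X : Type*} [Preorder X] (U : Set X) : Set X := {x | ∃ y ∈ U, x ≤ y}

/-- `pstar U = (U↓)ᶜ`. -/
def pstar {X : Type*} [Preorder X] (U : Set X) : Set X := (dwn U)ᶜ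

/-- Esakia space: compact, Priestley separation, downsets of clopens are clopen. -/
def IsEsakia (X : Type*) [TopologicalSpace X] [PartialOrder X] : Prop :=
  CompactSpace X ∧
    (∀ x y : X, ¬x ≤ y → ∃ U : Set X, IsClopen U ∧ IsUpperSet U ∧ x ∈ U ∧ y ∉ U) ∧
    (∀ U : Set X, IsClopen U → IsClopen (dwn U))

/-- The Alexandrov topology of a preorder: opens are exactly the upsets. -/
def alexTop (X : Type*) [Preorder X] : TopologicalSpace X where
  IsOpen U := IsUpperSet U
  isOpen_univ := isUpperSet_univ
  isOpen_inter := fun _ _ hU hV => hU.inter hV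
  isOpen_sUnion := fun _ h => isUpperSet_sUnion h

lemma subset_dwn {X : Type*} [Preorder X] (S : Set X) : S ⊆ dwn S :=
  fun x hx => ⟨x, hx, le_refl x⟩

lemma isLowerSet_dwn {X : Type*} [Preorder X] (S : Set X) : IsLowerSet (dwn S) :=
  fun _ _ hle ⟨y, hy, h⟩ => ⟨y, hy, hle.trans h⟩

lemma alex_closure {X : Type*} [Preorder X] (S : Set X) :
    @closure X (alexTop X) S = dwn S := by
  letI := alexTop X
  apply subset_antisymm
  · exact closure_minimal (subset_dwn S) ⟨(isLowerSet_dwn S).compl⟩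
  · rintro x ⟨y, hy, hxy⟩
    rw [mem_closure_iff]
    intro o ho hxo
    exact ⟨y, (ho : IsUpperSet o) hxy hxo, hy⟩

lemma alex_interior {X : Type*} [Preorder X] (S : Set X) :
    @interior X (alexTop X) S = (dwn Sᶜ)ᶜ := by
  letI := alexTop X
  rw [← compl_compl (interior S), ← closure_compl, alex_closure]

/-- for a clopen upset `U` of an Esakia space, the following are
equivalent: (i) `U` is regular in the Alexandrov topology of `≤`;
(ii) `U = U**`; (iii) `U↓ \ U ⊆ (U*)↓ \ U*`. -/
theorem stmt0 {X : Type*} [TopologicalSpace X] [PartialOrder X] (hX : IsEsakia X)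
    (U : Set X) (hclopen : IsClopen U) (hup : IsUpperSet U) :
    [@interior X (alexTop X) (@closure X (alexTop X) U) = U,
     U = pstar (pstar U),
     dwn U \ U ⊆ dwn (pstar U) \ pstar U].TFAE := by
  have key : @interior X (alexTop X) (@closure X (alexTop X) U) = pstar (pstar U) := by
    rw [alex_closure, alex_interior]; rfl
  have hUsub : U ⊆ pstar (pstar U) := by
    intro x hx ⟨y, hy, hxy⟩
    exact hy (subset_dwn U (hup hxy hx))
  tfae_have 1 ↔ 2
  · rw [key]; exact eq_comm
  tfae_have 2 → 3
  · intro h x ⟨hxd, hxU⟩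
    refine ⟨?_, fun hp => hp hxd⟩
    by_contra hnd
    exact hxU (h ▸ (hnd : x ∈ pstar (pstar U)))
  tfae_have 3 → 2
  · intro h
    apply subset_antisymm hUsub
    intro x hx
    by_contra hxU
    by_cases hd : x ∈ dwn U
    · exact hx (h ⟨hd, hxU⟩).1
    · exact hx (subset_dwn _ hd)
  tfae_finish
end

section
/- Let (X, ≤) be an Esakia space and let U be a clopen upset of X. Then U = U** if and only if for every x ∈ X one has x ∈ U ⟺ M(x) ⊆ U. -/
/-- `Mset x` is the set of maximal elements above `x`. -/
def Mset {X : Type*} [Preorder X] (x : X) : Set X :=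
  {m | x ≤ m ∧ ∀ y, m ≤ y → y = m}

/-- In an Esakia space, `Ici x` is closed. -/
lemma esakia_isClosed_Ici {X : Type*} [TopologicalSpace X] [PartialOrder X]
    (hX : IsEsakia X) (x : X) : IsClosed (Set.Ici x) := by
  obtain ⟨-, hsep, -⟩ := hX
  have : Set.Ici x = ⋂₀ {U : Set X | IsClopen U ∧ IsUpperSet U ∧ x ∈ U} := by
    ext y
    constructor
    · rintro hy V ⟨hVc, hVu, hVx⟩
      exact hVu hy hVx
    · intro hy
      by_contra hxy
      obtain ⟨V, hVc, hVu, hVx, hVy⟩ := hsep x y hxy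
      exact hVy (hy V ⟨hVc, hVu, hVx⟩)
  rw [this]
  exact isClosed_sInter fun V hV => hV.1.1

/-- In an Esakia space, every point lies below a maximal element. -/
lemma esakia_exists_max {X : Type*} [TopologicalSpace X] [PartialOrder X]
    (hX : IsEsakia X) (x : X) : ∃ m, x ≤ m ∧ IsMax m := by
  have hcomp : CompactSpace X := hX.1
  refine zorn_le_nonempty_Ici₀ x (fun c hcsub hchain y hy => ?_) x le_rfl
  -- chains have upper bounds by compactness
  haveI : Nonempty c := ⟨⟨y, hy⟩⟩
  have hne : (⋂ z : c, Set.Ici (z : X)).Nonempty := by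
    apply IsCompact.nonempty_iInter_of_directed_nonempty_isCompact_isClosed
    · rintro ⟨a, ha⟩ ⟨b, hb⟩
      rcases hchain.total ha hb with h | h
      · exact ⟨⟨b, hb⟩, Set.Ici_subset_Ici.2 h, le_refl _⟩
      · exact ⟨⟨a, ha⟩, le_refl _, Set.Ici_subset_Ici.2 h⟩
    · exact fun z => ⟨z, le_rfl⟩
    · exact fun z => (esakia_isClosed_Ici hX _).isCompact
    · exact fun z => esakia_isClosed_Ici hX _
  obtain ⟨ub, hub⟩ := hne
  exact ⟨ub, fun z hz => Set.mem_iInter.1 hub ⟨z, hz⟩⟩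

/-- a clopen upset `U` of an Esakia space satisfies `U = U**`
iff for every `x`, `x ∈ U ↔ M(x) ⊆ U`. -/
theorem stmt1 {X : Type*} [TopologicalSpace X] [PartialOrder X] (hX : IsEsakia X)
    (U : Set X) (hclopen : IsClopen U) (hup : IsUpperSet U) :
    U = pstar (pstar U) ↔ ∀ x : X, x ∈ U ↔ Mset x ⊆ U := by
  have hsub : U ⊆ pstar (pstar U) := by
    intro x hx
    intro hc
    obtain ⟨y, hy, hxy⟩ := hc
    exact hy ⟨y, hup hxy hx, le_rfl⟩
  constructor
  · intro hreg x
    constructor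
    · intro hx m hm
      exact hup hm.1 hx
    · intro hM
      rw [hreg]
      intro hc
      obtain ⟨y, hy, hxy⟩ := hc
      obtain ⟨m, hym, hmax⟩ := esakia_exists_max hX y
      have hmU : m ∈ U := hM ⟨hxy.trans hym, fun z hz => le_antisymm (hmax hz) hz⟩
      exact hy ⟨m, hmU, hym⟩
  · intro h
    refine Set.Subset.antisymm hsub (fun x hx => ?_)
    rw [h x]
    intro m hm
    -- x ∈ pstar (pstar U): every y ≥ x is in dwn U
    have : ∀ y, x ≤ y → y ∈ dwn U := by
      intro y hxy
      by_contra hy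
      exact hx ⟨y, hy, hxy⟩
    obtain ⟨u, huU, hmu⟩ := this m hm.1
    rwa [← hm.2 u hmu]
end

section
/- Let (X, ≤) be an Esakia space, let M_X be its set of maximal elements equipped with the subspace topology, and for a regular clopen upset U of X write M(U) := U ∩ M_X. Then the map U ↦ M(U) is a bijection from the set of regular clopen upsets of X onto the set of clopen subsets of M_X, and it satisfies M(U ∩ V) = M(U) ∩ M(V) and M(U*) = M_X \ M(U) for all regular clopen upsets U, V; in particular it is an isomorphism of Boolean algebras from the regular clopen upsets of X (ordered by inclusion, with meet ∩ and complementation U ↦ U*) onto the Boolean algebra of clopen subsets of M_X. -/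
set_option linter.unusedSectionVars false


/-- Regular clopen upset: clopen, an upset, and `U = U**`. -/
def IsRCU {X : Type*} [TopologicalSpace X] [PartialOrder X] (U : Set X) : Prop :=
  IsClopen U ∧ IsUpperSet U ∧ U = pstar (pstar U)

/-- The set of maximal elements of `X`. -/
def maxSet (X : Type*) [Preorder X] : Set X := {m | ∀ y, m ≤ y → y = m}

section Aux

variable {X : Type*} [TopologicalSpace X] [PartialOrder X]

lemma pstar_antitone {U V : Set X} (h : U ⊆ V) : pstar V ⊆ pstar U := by
  intro x hx hmem
  exact hx ⟨hmem.choose, h hmem.choose_spec.1, hmem.choose_spec.2⟩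

lemma isUpperSet_pstar (U : Set X) : IsUpperSet (pstar U) := by
  intro a b hab ha hb
  obtain ⟨y, hyU, hby⟩ := hb
  exact ha ⟨y, hyU, hab.trans hby⟩

lemma subset_pstar_pstar {U : Set X} (hU : IsUpperSet U) : U ⊆ pstar (pstar U) := by
  rintro x hx ⟨y, hy, hxy⟩
  exact hy ⟨y, hU hxy hx, le_refl y⟩

lemma pstar_pstar_pstar {U : Set X} (hU : IsUpperSet U) :
    pstar (pstar (pstar U)) = pstar U :=
  le_antisymm (pstar_antitone (subset_pstar_pstar hU))
    (subset_pstar_pstar (isUpperSet_pstar U))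

lemma isClopen_pstar (hX : IsEsakia X) {U : Set X} (hU : IsClopen U) :
    IsClopen (pstar U) := (hX.2.2 U hU).compl

lemma Ici_closed (hX : IsEsakia X) (x : X) : IsClosed (Set.Ici x) := by
  rw [← isOpen_compl_iff, isOpen_iff_mem_nhds]
  intro y hy
  obtain ⟨U, hUc, hUup, hxU, hyU⟩ := hX.2.1 x y hy
  refine Filter.mem_of_superset (hUc.compl.isOpen.mem_nhds hyU) ?_
  intro z hz hxz
  exact hz (hUup hxz hxU)

lemma exists_max_above (hX : IsEsakia X) (x : X) : ∃ m ∈ maxSet X, x ≤ m := by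
  have := hX.1
  have hchainbd : ∀ c ⊆ Set.Ici x, IsChain (· ≤ ·) c → ∀ y ∈ c, ∃ ub, ∀ z ∈ c, z ≤ ub := by
    intro c hc hchain y hy
    have hne : Nonempty c := ⟨⟨y, hy⟩⟩
    have hdir : Directed (· ⊇ ·) (fun i : c => Set.Ici (i : X)) := by
      intro i j
      rcases hchain.total i.2 j.2 with h | h
      · exact ⟨j, Set.Ici_subset_Ici.2 h, le_refl _⟩
      · exact ⟨i, le_refl _, Set.Ici_subset_Ici.2 h⟩
    have hnonempty : (⋂ i : c, Set.Ici (i : X)).Nonempty :=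
      IsCompact.nonempty_iInter_of_directed_nonempty_isCompact_isClosed _ hdir
        (fun i => ⟨i, le_refl _⟩)
        (fun i => (Ici_closed hX _).isCompact)
        (fun i => Ici_closed hX _)
    obtain ⟨ub, hub⟩ := hnonempty
    exact ⟨ub, fun z hz => Set.mem_iInter.1 hub ⟨z, hz⟩⟩
  obtain ⟨m, hxm, hm⟩ := zorn_le_nonempty_Ici₀ x hchainbd x le_rfl
  exact ⟨m, fun z hz => le_antisymm (hm hz) hz, hxm⟩

lemma maxSet_closed (hX : IsEsakia X) : IsClosed (maxSet X) := by
  rw [← isOpen_compl_iff, isOpen_iff_mem_nhds]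
  intro x hx
  simp only [maxSet, Set.mem_compl_iff, Set.mem_setOf_eq, not_forall] at hx
  obtain ⟨y, hxy, hyx⟩ := hx
  have hnyx : ¬ y ≤ x := fun h => hyx (le_antisymm h hxy)
  obtain ⟨U, hUc, hUup, hyU, hxU⟩ := hX.2.1 y x hnyx
  have hclopen : IsClopen (dwn U ∩ Uᶜ) := (hX.2.2 U hUc).inter hUc.compl
  refine Filter.mem_of_superset (hclopen.isOpen.mem_nhds ⟨⟨y, hyU, hxy⟩, hxU⟩) ?_
  rintro z ⟨⟨w, hwU, hzw⟩, hzU⟩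
  simp only [maxSet, Set.mem_compl_iff, Set.mem_setOf_eq, not_forall]
  exact ⟨w, hzw, fun h => hzU (h ▸ hwU)⟩

lemma mem_pstar_max {U : Set X} {m : X} (hm : m ∈ maxSet X) :
    m ∈ pstar U ↔ m ∉ U := by
  constructor
  · intro h hmU; exact h ⟨m, hmU, le_refl m⟩
  · rintro h ⟨y, hyU, hmy⟩
    exact h ((hm y hmy) ▸ hyU)

lemma dwn_eq_dwn_inter_max (hX : IsEsakia X) {U : Set X} (hU : IsUpperSet U) :
    dwn U = dwn (U ∩ maxSet X) := by
  apply Set.Subset.antisymm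
  · rintro x ⟨y, hyU, hxy⟩
    obtain ⟨m, hm, hym⟩ := exists_max_above hX y
    exact ⟨m, ⟨hU hym hyU, hm⟩, hxy.trans hym⟩
  · rintro x ⟨y, hy, hxy⟩
    exact ⟨y, hy.1, hxy⟩

/-- separate a compact set of "not-≤-related" points from a compact set by a clopen upset -/
lemma sep_compact_compact (hX : IsEsakia X) {S K : Set X} (hS : IsCompact S)
    (hK : IsCompact K) (h : ∀ s ∈ S, ∀ t ∈ K, ¬ s ≤ t) :
    ∃ W : Set X, IsClopen W ∧ IsUpperSet W ∧ S ⊆ W ∧ Disjoint W K := by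
  -- first for a single point
  have key : ∀ s ∈ S, ∃ U : Set X, IsClopen U ∧ IsUpperSet U ∧ s ∈ U ∧ Disjoint U K := by
    intro s hs
    choose V hVc hVup hsV htV using fun t : K => hX.2.1 s t (h s hs t t.2)
    obtain ⟨F, hF⟩ := hK.elim_finite_subcover (fun t : K => (V t)ᶜ)
      (fun t => (hVc t).compl.isOpen)
      (by intro t ht; exact Set.mem_iUnion.2 ⟨⟨t, ht⟩, htV ⟨t, ht⟩⟩)
    refine ⟨⋂ t ∈ F, V t, ?_, ?_, ?_, ?_⟩
    · exact Set.Finite.isClopen_biInter F.finite_toSet (fun t _ => hVc t)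
    · exact isUpperSet_iInter₂ (fun t _ => hVup t)
    · exact Set.mem_iInter₂.2 (fun t _ => hsV t)
    · rw [Set.disjoint_left]
      intro a ha haK
      obtain ⟨t, ht⟩ := Set.mem_iUnion.1 (hF haK)
      obtain ⟨htF, hat⟩ := Set.mem_iUnion.1 ht
      exact hat (Set.mem_iInter₂.1 ha t htF)
  choose U hUc hUup hsU hUK using key
  obtain ⟨F, hF⟩ := hS.elim_finite_subcover (fun s : S => U s s.2)
    (fun s => (hUc s s.2).isOpen)
    (by intro s hs; exact Set.mem_iUnion.2 ⟨⟨s, hs⟩, hsU s hs⟩)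
  refine ⟨⋃ s ∈ F, U s s.2, ?_, ?_, ?_, ?_⟩
  · exact Set.Finite.isClopen_biUnion F.finite_toSet (fun s _ => hUc s s.2)
  · exact isUpperSet_iUnion₂ (fun s _ => hUup s s.2)
  · intro a ha
    obtain ⟨s, hs⟩ := Set.mem_iUnion.1 (hF ha)
    obtain ⟨hsF, has⟩ := Set.mem_iUnion.1 hs
    exact Set.mem_biUnion hsF has
  · rw [Set.disjoint_left]
    intro a ha haK
    obtain ⟨s, hsF, has⟩ := Set.mem_iUnion₂.1 ha
    exact Set.disjoint_left.1 (hUK s s.2) has haK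

end Aux


/-- `U ↦ U ∩ M_X` is a bijection from regular clopen upsets of an
Esakia space `X` onto the clopen subsets of the subspace `M_X` of maximal
elements, preserving intersections and sending `U*` to the complement; hence it
is an isomorphism of Boolean algebras. -/
theorem stmt2 {X : Type*} [TopologicalSpace X] [PartialOrder X] (hX : IsEsakia X) :
    (∀ U : Set X, IsRCU U → IsClopen (Subtype.val ⁻¹' U : Set ↥(maxSet X))) ∧
    (∀ U V : Set X, IsRCU U → IsRCU V →
      (Subtype.val ⁻¹' U : Set ↥(maxSet X)) = Subtype.val ⁻¹' V → U = V) ∧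
    (∀ S : Set ↥(maxSet X), IsClopen S →
      ∃ U : Set X, IsRCU U ∧ Subtype.val ⁻¹' U = S) ∧
    (∀ U V : Set X, IsRCU U → IsRCU V →
      (Subtype.val ⁻¹' (U ∩ V) : Set ↥(maxSet X)) =
        (Subtype.val ⁻¹' U) ∩ (Subtype.val ⁻¹' V)) ∧
    (∀ U : Set X, IsRCU U →
      (Subtype.val ⁻¹' (pstar U) : Set ↥(maxSet X)) = (Subtype.val ⁻¹' U)ᶜ) := by
  have hCS := hX.1
  refine ⟨?_, ?_, ?_, ?_, ?_⟩
  · intro U hU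
    exact hU.1.preimage continuous_subtype_val
  · -- injectivity
    intro U V hU hV hpre
    have hm : ∀ m ∈ maxSet X, (m ∈ U ↔ m ∈ V) := by
      intro m hm
      have := Set.ext_iff.1 hpre ⟨m, hm⟩
      simpa using this
    have hUV : U ∩ maxSet X = V ∩ maxSet X := by
      ext x
      exact ⟨fun h => ⟨(hm x h.2).1 h.1, h.2⟩, fun h => ⟨(hm x h.2).2 h.1, h.2⟩⟩
    have hdwn : dwn U = dwn V := by
      rw [dwn_eq_dwn_inter_max hX hU.2.1, dwn_eq_dwn_inter_max hX hV.2.1, hUV]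
    rw [hU.2.2, hV.2.2]
    unfold pstar
    rw [hdwn]
  · -- surjectivity
    intro S hS
    have hMclosed : IsClosed (maxSet X) := maxSet_closed hX
    have hMcompact : IsCompact (maxSet X) := hMclosed.isCompact
    have : CompactSpace ↥(maxSet X) := isCompact_iff_compactSpace.1 hMcompact
    set S' : Set X := Subtype.val '' S with hS'
    set K' : Set X := Subtype.val '' Sᶜ with hK'
    have hS'c : IsCompact S' := (hS.1.isCompact).image continuous_subtype_val
    have hK'c : IsCompact K' := (hS.2.isClosed_compl.isCompact).image continuous_subtype_val
    have hsep : ∀ s ∈ S', ∀ t ∈ K', ¬ s ≤ t := by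
      rintro s ⟨⟨s, hsM⟩, hsS, rfl⟩ t ⟨⟨t, htM⟩, htS, rfl⟩ hst
      have : t = s := hsM t hst
      subst this
      exact htS hsS
    obtain ⟨W, hWc, hWup, hSW, hWK⟩ := sep_compact_compact hX hS'c hK'c hsep
    refine ⟨pstar (pstar W), ⟨?_, ?_, ?_⟩, ?_⟩
    · exact isClopen_pstar hX (isClopen_pstar hX hWc)
    · exact isUpperSet_pstar _
    · rw [pstar_pstar_pstar (isUpperSet_pstar W)]
    · ext ⟨m, hmM⟩
      simp only [Set.mem_preimage]
      rw [mem_pstar_max hmM, mem_pstar_max hmM, not_not]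
      constructor
      · intro hmW
        by_contra hmS
        exact Set.disjoint_left.1 hWK hmW ⟨⟨m, hmM⟩, hmS, rfl⟩
      · intro hmS
        exact hSW ⟨⟨m, hmM⟩, hmS, rfl⟩
  · intro U V _ _
    rfl
  · intro U hU
    ext ⟨m, hmM⟩
    simp only [Set.mem_preimage, Set.mem_compl_iff]
    exact mem_pstar_max hmM
end

section
/- Let F be a finite poset and let R be the collection of its regular upsets. Then the Heyting closure ⟨R⟩ equals the collection of all upsets of F if and only if the following two conditions hold: (i) every non-maximal x ∈ F has at least two immediate successors, i.e. |S(x)| ≥ 2; (ii) for all non-maximal x, y ∈ F, if x ≠ y then S(x) ≠ S(y). -/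
/-- Heyting implication of upsets: `U ⇨ V := ((U \ V)↓)ᶜ`. -/
def heyImp {X : Type*} [Preorder X] (U V : Set X) : Set X := (dwn (U \ V))ᶜ

/-- The Heyting closure of a collection `R` of sets: the least collection
containing `R`, `∅` and the whole carrier, closed under `∩`, `∪` and `⇨`. -/
inductive HClos {X : Type*} [Preorder X] (R : Set (Set X)) : Set X → Prop
  | base : ∀ U ∈ R, HClos R U
  | bot : HClos R ∅
  | top : HClos R Set.univ
  | inter : ∀ {U V}, HClos R U → HClos R V → HClos R (U ∩ V)
  | union : ∀ {U V}, HClos R U → HClos R V → HClos R (U ∪ V)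
  | imp : ∀ {U V}, HClos R U → HClos R V → HClos R (heyImp U V)

/-- The regular upsets of a poset: upsets `U` with `U = U**`. -/
def regUps (F : Type*) [Preorder F] : Set (Set F) :=
  {U | IsUpperSet U ∧ U = pstar (pstar U)}

/-- The immediate successors of `x`. -/
def succs {F : Type*} [Preorder F] (x : F) : Set F :=
  {y | x < y ∧ ¬∃ z, x < z ∧ z < y}

set_option linter.unusedSectionVars false

section Aux
variable {F : Type*} [PartialOrder F]

lemma mem_heyImp {U V : Set F} {z : F} :
    z ∈ heyImp U V ↔ ∀ w, z ≤ w → w ∈ U → w ∈ V := by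
  simp only [heyImp, dwn, Set.mem_compl_iff, Set.mem_setOf_eq, Set.mem_diff, not_exists]
  constructor
  · intro h w hzw hwU
    by_contra hwV
    exact h w ⟨⟨hwU, hwV⟩, hzw⟩
  · rintro h w ⟨⟨hwU, hwV⟩, hzw⟩
    exact hwV (h w hzw hwU)

lemma mem_pstar_pstar {U : Set F} {z : F} :
    z ∈ pstar (pstar U) ↔ ∀ w, z ≤ w → ∃ y ∈ U, w ≤ y := by
  simp only [pstar, dwn, Set.mem_compl_iff, Set.mem_setOf_eq, not_exists, not_forall, not_not]
  push_neg
  constructor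
  · intro h w hzw
    by_contra hc
    push_neg at hc
    exact h w (fun y hy hwy => hc y hy hwy) hzw
  · intro h w hw hzw
    obtain ⟨y, hyU, hwy⟩ := h w hzw
    exact hw y hyU hwy

lemma compl_dwn_upper (A : Set F) : IsUpperSet (dwn A)ᶜ := by
  intro a b hab ha hb
  obtain ⟨y, hy, hby⟩ := hb
  exact ha ⟨y, hy, hab.trans hby⟩

lemma heyImp_upper (U V : Set F) : IsUpperSet (heyImp U V) := compl_dwn_upper _
lemma pstar_upper (U : Set F) : IsUpperSet (pstar U) := compl_dwn_upper _

lemma pstar_eq_heyImp (U : Set F) : pstar U = heyImp U ∅ := by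
  simp [pstar, heyImp]

lemma upper_subset_pstar_pstar {U : Set F} (h : IsUpperSet U) : U ⊆ pstar (pstar U) := by
  intro z hz
  rw [mem_pstar_pstar]
  exact fun w hzw => ⟨w, h hzw hz, le_rfl⟩

lemma hclos_upper {R : Set (Set F)} (hR : ∀ U ∈ R, IsUpperSet U) {U : Set F}
    (h : HClos R U) : IsUpperSet U := by
  induction h with
  | base V hV => exact hR V hV
  | bot => exact isUpperSet_empty
  | top => exact isUpperSet_univ
  | inter _ _ h1 h2 => exact h1.inter h2
  | union _ _ h1 h2 => exact h1.union h2
  | imp _ _ _ _ => exact heyImp_upper _ _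

lemma hclos_reg_upper {U : Set F} (h : HClos (regUps F) U) : IsUpperSet U :=
  hclos_upper (fun _ hV => hV.1) h

lemma hclos_biUnion {R : Set (Set F)} (s : Finset F) (f : F → Set F)
    (h : ∀ i ∈ s, HClos R (f i)) : HClos R (⋃ i ∈ s, f i) := by
  classical
  induction s using Finset.induction with
  | empty => simpa using HClos.bot
  | @insert a s ha ih =>
      rw [Finset.set_biUnion_insert]
      exact HClos.union (h a (Finset.mem_insert_self a s))
        (ih fun i hi => h i (Finset.mem_insert_of_mem hi))

lemma hclos_biInter {R : Set (Set F)} (s : Finset F) (f : F → Set F)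
    (h : ∀ i ∈ s, HClos R (f i)) : HClos R (⋂ i ∈ s, f i) := by
  classical
  induction s using Finset.induction with
  | empty => simpa using HClos.top
  | @insert a s ha ih =>
      rw [Finset.set_biInter_insert]
      exact HClos.inter (h a (Finset.mem_insert_self a s))
        (ih fun i hi => h i (Finset.mem_insert_of_mem hi))

variable [Fintype F]

lemma hclos_sUnion {R : Set (Set F)} (S : Set F) (f : F → Set F)
    (h : ∀ a ∈ S, HClos R (f a)) : HClos R (⋃ a ∈ S, f a) := by
  classical
  have : (⋃ a ∈ S, f a) = ⋃ a ∈ S.toFinset, f a := by simp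
  rw [this]
  exact hclos_biUnion _ _ (by simpa using h)

lemma hclos_sInter {R : Set (Set F)} (S : Set F) (f : F → Set F)
    (h : ∀ a ∈ S, HClos R (f a)) : HClos R (⋂ a ∈ S, f a) := by
  classical
  have : (⋂ a ∈ S, f a) = ⋂ a ∈ S.toFinset, f a := by simp
  rw [this]
  exact hclos_biInter _ _ (by simpa using h)

lemma upper_eq_biUnion {U : Set F} (h : IsUpperSet U) : U = ⋃ a ∈ U, Set.Ici a := by
  apply Set.Subset.antisymm
  · intro a ha
    exact Set.mem_biUnion ha (Set.mem_Ici.2 le_rfl)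
  · intro a ha
    obtain ⟨b, hb, hab⟩ := Set.mem_iUnion₂.1 ha
    exact h (Set.mem_Ici.1 hab) hb

lemma exists_succ_le {x w : F} (h : x < w) : ∃ s ∈ succs x, s ≤ w := by
  classical
  obtain ⟨s, hs, hmin⟩ := Finset.exists_minimal
    (s := Finset.univ.filter (fun u => x < u ∧ u ≤ w)) ⟨w, by simp [h]⟩
  simp only [Finset.mem_filter, Finset.mem_univ, true_and] at hs
  refine ⟨s, ⟨hs.1, ?_⟩, hs.2⟩
  rintro ⟨z, hxz, hzs⟩
  refine hzs.not_ge (hmin ?_ hzs.le)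
  simp only [Finset.mem_filter, Finset.mem_univ, true_and]
  exact ⟨hxz, hzs.le.trans hs.2⟩

lemma exists_maximal_mem {A : Set F} (h : A.Nonempty) :
    ∃ z ∈ A, ∀ w ∈ A, ¬ z < w := by
  classical
  obtain ⟨z, hz, hmax⟩ := Finset.exists_maximal (s := Set.toFinset A)
    (by rwa [Set.toFinset_nonempty])
  exact ⟨z, Set.mem_toFinset.1 hz, fun w hw hzw => hzw.not_ge (hmax (Set.mem_toFinset.2 hw) hzw.le)⟩

lemma succs_eq_min_Ioi (x : F) :
    succs x = {y | y ∈ Set.Ioi x ∧ ∀ z ∈ Set.Ioi x, ¬ z < y} := by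
  ext y
  simp only [succs, Set.mem_setOf_eq, Set.mem_Ioi, not_exists]
  constructor
  · rintro ⟨h1, h2⟩; exact ⟨h1, fun z hz hzy => h2 z ⟨hz, hzy⟩⟩
  · rintro ⟨h1, h2⟩; exact ⟨h1, fun z ⟨hz, hzy⟩ => h2 z hz hzy⟩

lemma succs_congr {x y : F} (h : Set.Ioi x = Set.Ioi y) : succs x = succs y := by
  rw [succs_eq_min_Ioi, succs_eq_min_Ioi, h]

lemma succs_of_Ioi_singleton {x m : F} (h : Set.Ioi x = {m}) : succs x = {m} := by
  rw [succs_eq_min_Ioi, h]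
  ext y
  simp only [Set.mem_setOf_eq, Set.mem_singleton_iff]
  constructor
  · rintro ⟨h1, _⟩; exact h1
  · rintro rfl; exact ⟨rfl, by rintro z rfl; exact lt_irrefl _⟩

end Aux

section Main
set_option linter.unusedSectionVars false
variable {F : Type*} [PartialOrder F] [Fintype F]

/-- The key set-equality: for non-maximal `x`, `↑x` is expressed by a Heyting
combination of the sets `↑v`, `v > x`. -/
lemma key_eq (h1 : ∀ x : F, (∃ y, x < y) → 2 ≤ (succs x).ncard)
    (h2 : ∀ x y : F, (∃ z, x < z) → (∃ z, y < z) → x ≠ y → succs x ≠ succs y)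
    {x y0 : F} (hy0 : x < y0) :
    Set.Ici x = pstar (pstar (Set.Ioi x)) ∩
      ⋂ v ∈ Set.Ioi x, heyImp (heyImp (Set.Ici v) (Set.Ioi v))
        (⋃ w ∈ Set.Ioi x ∩ heyImp (Set.Ici v) (Set.Ioi v), Set.Ici w) := by
  apply Set.Subset.antisymm
  · -- `↑x ⊆ Φ`
    intro z hz
    have hz' : x ≤ z := hz
    constructor
    · -- z ∈ pstar (pstar (Ioi x))
      rw [mem_pstar_pstar]
      intro w hzw
      rcases eq_or_lt_of_le (hz'.trans hzw) with h | h
      · exact ⟨y0, hy0, h ▸ hy0.le⟩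
      · exact ⟨w, h, le_rfl⟩
    · -- z ∈ each Ψ v
      rw [Set.mem_iInter₂]
      intro v hv
      rw [mem_heyImp]
      intro u hzu huΓ
      rcases eq_or_lt_of_le (hz'.trans hzu) with h | h
      · -- u = x : impossible since x ∉ Γ v
        exfalso
        have : v ∈ Set.Ioi v := by
          refine mem_heyImp.1 huΓ v ?_ (Set.mem_Ici.2 le_rfl)
          exact h ▸ (le_of_lt hv)
        exact lt_irrefl v this
      · exact Set.mem_biUnion ⟨h, huΓ⟩ (Set.mem_Ici.2 le_rfl)
  · -- `Φ ⊆ ↑x`, via a maximal counterexample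
    by_contra hsub
    rw [Set.not_subset] at hsub
    obtain ⟨z0, hz0Φ, hz0x⟩ := hsub
    obtain ⟨z, hzA, hzmax⟩ := exists_maximal_mem (A := _ \ Set.Ici x) ⟨z0, hz0Φ, hz0x⟩
    obtain ⟨hzΦ, hzx⟩ := hzA
    obtain ⟨hzB, hzΨ⟩ := hzΦ
    -- Φ is an upper set
    have hΦupper : IsUpperSet (pstar (pstar (Set.Ioi x)) ∩
        ⋂ v ∈ Set.Ioi x, heyImp (heyImp (Set.Ici v) (Set.Ioi v))
          (⋃ w ∈ Set.Ioi x ∩ heyImp (Set.Ici v) (Set.Ioi v), Set.Ici w)) := by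
      refine (pstar_upper _).inter ?_
      intro a b hab ha
      rw [Set.mem_iInter₂] at ha ⊢
      exact fun v hv => heyImp_upper _ _ hab (ha v hv)
    -- elements strictly above z lie in ↑x
    have hup : ∀ w, z < w → x ≤ w := by
      intro w hw
      by_contra hc
      exact hzmax w ⟨hΦupper hw.le ⟨hzB, hzΨ⟩, hc⟩ hw
    -- z is not maximal
    have hznm : ∃ u, z < u := by
      obtain ⟨u, hu, hzu⟩ := mem_pstar_pstar.1 hzB z le_rfl
      have : z ≠ u := fun h => hzx (Set.mem_Ici.2 (h ▸ hu).le)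
      exact ⟨u, lt_of_le_of_ne hzu this⟩
    -- x is not strictly above z
    have hxz : ¬ z < x := by
      intro hzltx
      obtain ⟨s, hs, hsx⟩ := exists_succ_le hzltx
      have hsx' : s = x := le_antisymm hsx (hup s hs.1)
      have h2s := h1 z hznm
      obtain ⟨u, hu, hux⟩ := Set.exists_ne_of_one_lt_ncard (s := succs z) (by omega) x
      have hxu : x ≤ u := hup u hu.1
      have : x < u := lt_of_le_of_ne hxu (Ne.symm hux)
      exact hu.2 ⟨x, hzltx, this⟩
    -- Ioi z ⊆ Ioi x
    have hIoisub : Set.Ioi z ⊆ Set.Ioi x := by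
      intro w hw
      rcases eq_or_lt_of_le (hup w hw) with h | h
      · exact absurd (h ▸ hw) hxz
      · exact h
    -- Ioi z ≠ Ioi x
    have hne : Set.Ioi z ≠ Set.Ioi x := by
      intro h
      exact h2 z x hznm ⟨y0, hy0⟩ (fun hzx' => hzx (hzx' ▸ Set.mem_Ici.2 le_rfl))
        (succs_congr h)
    obtain ⟨v, hvIoi, hvz⟩ := Set.exists_of_ssubset (ssubset_of_subset_of_ne hIoisub hne)
    -- z ∈ Γ v
    have hzΓ : z ∈ heyImp (Set.Ici v) (Set.Ioi v) := by
      rw [mem_heyImp]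
      intro w hzw hwv
      rcases eq_or_lt_of_le (Set.mem_Ici.1 hwv) with h | h
      · exfalso
        have hzv : z ≤ v := le_of_le_of_eq hzw h.symm
        have hzvne : z ≠ v := fun hzv' => hzx (by rw [hzv']; exact Set.mem_Ici.2 hvIoi.le)
        exact hvz (Set.mem_Ioi.2 (lt_of_le_of_ne hzv hzvne))
      · exact h
    -- z ∉ Δ v
    have hzΔ : z ∉ ⋃ w ∈ Set.Ioi x ∩ heyImp (Set.Ici v) (Set.Ioi v), Set.Ici w := by
      intro hmem
      obtain ⟨w, hw, hwz⟩ := Set.mem_iUnion₂.1 hmem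
      exact hzx (Set.mem_Ici.2 (hw.1.le.trans (Set.mem_Ici.1 hwz)))
    exact hzΔ (mem_heyImp.1 (Set.mem_iInter₂.1 hzΨ v hvIoi) z le_rfl hzΓ)

end Main

section Main2
set_option linter.unusedSectionVars false
variable {F : Type*} [PartialOrder F] [Fintype F]

/-- Under the two conditions, the principal upset of a maximal point is regular. -/
lemma maximal_Ici_reg (h1 : ∀ x : F, (∃ y, x < y) → 2 ≤ (succs x).ncard)
    {x : F} (hmax : ¬ ∃ y, x < y) : Set.Ici x ∈ regUps F := by
  push_neg at hmax
  refine ⟨isUpperSet_Ici x, Set.Subset.antisymm (upper_subset_pstar_pstar (isUpperSet_Ici x)) ?_⟩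
  by_contra hsub
  rw [Set.not_subset] at hsub
  obtain ⟨z0, hz0B, hz0x⟩ := hsub
  obtain ⟨z, hzA, hzmax⟩ := exists_maximal_mem
    (A := pstar (pstar (Set.Ici x)) \ Set.Ici x) ⟨z0, hz0B, hz0x⟩
  obtain ⟨hzB, hzx⟩ := hzA
  have hBupper : IsUpperSet (pstar (pstar (Set.Ici x))) := pstar_upper _
  -- z < x
  have hzltx : z < x := by
    obtain ⟨u, hu, hzu⟩ := mem_pstar_pstar.1 hzB z le_rfl
    have hux : u = x := ((eq_or_lt_of_le (Set.mem_Ici.1 hu)).resolve_right (hmax u)).symm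
    have : z ≠ x := fun h => hzx (Set.mem_Ici.2 h.ge)
    exact lt_of_le_of_ne (hux ▸ hzu) this
  -- Ioi z = {x}
  have hIoi : Set.Ioi z = {x} := by
    apply Set.Subset.antisymm
    · intro w hw
      have hwB : w ∈ pstar (pstar (Set.Ici x)) := hBupper (Set.mem_Ioi.1 hw).le hzB
      have hwx : x ≤ w := by
        by_contra hc
        exact hzmax w ⟨hwB, hc⟩ hw
      exact Set.mem_singleton_iff.2 ((eq_or_lt_of_le hwx).resolve_right (hmax w)).symm
    · rintro w rfl
      exact Set.mem_Ioi.2 hzltx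
  have := h1 z ⟨x, hzltx⟩
  rw [succs_of_Ioi_singleton hIoi, Set.ncard_singleton] at this
  omega

lemma hclos_Ici (h1 : ∀ x : F, (∃ y, x < y) → 2 ≤ (succs x).ncard)
    (h2 : ∀ x y : F, (∃ z, x < z) → (∃ z, y < z) → x ≠ y → succs x ≠ succs y)
    (x : F) : HClos (regUps F) (Set.Ici x) := by
  refine WellFounded.induction (C := fun x => HClos (regUps F) (Set.Ici x)) wellFounded_gt x ?_
  intro x IH
  by_cases hmax : ∃ y, x < y
  · obtain ⟨y0, hy0⟩ := hmax
    rw [key_eq h1 h2 hy0]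
    have hIciH : ∀ v ∈ Set.Ioi x, HClos (regUps F) (Set.Ici v) := fun v hv => IH v hv
    have hIoiH : ∀ v ∈ Set.Ici x, HClos (regUps F) (Set.Ioi v) := by
      intro v hv
      rw [upper_eq_biUnion (isUpperSet_Ioi v)]
      exact hclos_sUnion _ _ (fun a ha => IH a (lt_of_le_of_lt (Set.mem_Ici.1 hv) ha))
    refine HClos.inter ?_ ?_
    · rw [pstar_eq_heyImp, pstar_eq_heyImp]
      exact HClos.imp (HClos.imp (hIoiH x (Set.mem_Ici.2 le_rfl)) HClos.bot) HClos.bot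
    · refine hclos_sInter _ _ ?_
      intro v hv
      refine HClos.imp (HClos.imp (hIciH v hv) (hIoiH v hv.le)) ?_
      exact hclos_sUnion _ _ (fun w hw => hIciH w hw.1)
  · exact HClos.base _ (maximal_Ici_reg h1 hmax)

/-- Necessity invariant for condition (i): if `s` is the unique immediate
successor of `x`, no set in the closure separates them. -/
lemma invariant_one {x s : F} (hxs : x < s) (hsucc : ∀ w, x < w → s ≤ w)
    {U : Set F} (hU : HClos (regUps F) U) : s ∈ U → x ∈ U := by
  induction hU with
  | base V hV =>
      intro hsV
      rw [hV.2, mem_pstar_pstar]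
      intro w hxw
      rcases eq_or_lt_of_le hxw with h | hlt
      · exact ⟨s, hsV, h ▸ hxs.le⟩
      · exact ⟨w, hV.1 (hsucc w hlt) hsV, le_rfl⟩
  | bot => exact fun h => absurd h (Set.notMem_empty s)
  | top => exact fun _ => trivial
  | inter _ _ ihA ihB => rintro ⟨h1, h2⟩; exact ⟨ihA h1, ihB h2⟩
  | union _ _ ihA ihB => rintro (h | h); exacts [Or.inl (ihA h), Or.inr (ihB h)]
  | @imp A B hA hB ihA ihB =>
      intro hs
      rw [mem_heyImp] at hs ⊢
      intro w hxw hwU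
      rcases eq_or_lt_of_le hxw with h | hlt
      · have hsU : s ∈ A := hclos_reg_upper hA hxs.le (h ▸ hwU)
        have := ihB (hs s le_rfl hsU)
        exact h ▸ this
      · exact hs w (hsucc w hlt) hwU

/-- Necessity invariant for condition (ii): if `Ioi x = Ioi y` for two
non-maximal points, no set in the closure separates them. -/
lemma invariant_two {x y : F} (hIoi : Set.Ioi x = Set.Ioi y)
    (hx : ∃ z, x < z) (hy : ∃ z, y < z)
    {U : Set F} (hU : HClos (regUps F) U) : x ∈ U ↔ y ∈ U := by
  have reg_step : ∀ {a b : F}, Set.Ioi a = Set.Ioi b → (∃ z, b < z) →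
      ∀ {V : Set F}, V ∈ regUps F → a ∈ V → b ∈ V := by
    intro a b h hb V hV ha
    rw [hV.2, mem_pstar_pstar]
    intro w hbw
    rcases eq_or_lt_of_le hbw with he | hlt
    · obtain ⟨z0, hz0⟩ := hb
      have hz0a : a < z0 := Set.mem_Ioi.1 (h ▸ Set.mem_Ioi.2 hz0)
      exact ⟨z0, hV.1 hz0a.le ha, he ▸ hz0.le⟩
    · have hwa : a < w := Set.mem_Ioi.1 (h ▸ Set.mem_Ioi.2 hlt)
      exact ⟨w, hV.1 hwa.le ha, le_rfl⟩
  induction hU with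
  | base V hV =>
      exact ⟨fun h => reg_step hIoi hy hV h, fun h => reg_step hIoi.symm hx hV h⟩
  | bot => exact Iff.rfl
  | top => exact Iff.rfl
  | inter _ _ ihA ihB => exact and_congr ihA ihB
  | union _ _ ihA ihB => exact or_congr ihA ihB
  | @imp A B hA hB ihA ihB =>
      constructor
      · intro h
        rw [mem_heyImp] at h ⊢
        intro w hyw hwA
        rcases eq_or_lt_of_le hyw with he | hlt
        · have hxA : x ∈ A := ihA.2 (he ▸ hwA)
          have := ihB.1 (h x le_rfl hxA)
          exact he ▸ this
        · have hxw : x < w := Set.mem_Ioi.1 (hIoi ▸ Set.mem_Ioi.2 hlt)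
          exact h w hxw.le hwA
      · intro h
        rw [mem_heyImp] at h ⊢
        intro w hxw hwA
        rcases eq_or_lt_of_le hxw with he | hlt
        · have hyA : y ∈ A := ihA.1 (he ▸ hwA)
          have := ihB.2 (h y le_rfl hyA)
          exact he ▸ this
        · have hyw : y < w := Set.mem_Ioi.1 (hIoi ▸ Set.mem_Ioi.2 hlt)
          exact h w hyw.le hwA

end Main2

/-- for a finite poset `F`, the Heyting closure of the regular
upsets is the collection of all upsets iff (i) every non-maximal element has at
least two immediate successors and (ii) distinct non-maximal elements have
distinct sets of immediate successors. -/
theorem stmt5 {F : Type*} [Fintype F] [PartialOrder F] :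
    ({U : Set F | HClos (regUps F) U} = {U : Set F | IsUpperSet U}) ↔
    ((∀ x : F, (∃ y, x < y) → 2 ≤ (succs x).ncard) ∧
      (∀ x y : F, (∃ z, x < z) → (∃ z, y < z) → x ≠ y → succs x ≠ succs y)) := by
  constructor
  · intro hEq
    have hmemH : ∀ U : Set F, IsUpperSet U → HClos (regUps F) U := by
      intro U hU
      have : U ∈ {U : Set F | IsUpperSet U} := hU
      rw [← hEq] at this
      exact this
    constructor
    · -- condition (i)
      intro x hx
      by_contra hc
      push_neg at hc
      obtain ⟨y0, hy0⟩ := hx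
      obtain ⟨s, hs, _⟩ := exists_succ_le hy0
      have hsucc : ∀ w, x < w → s ≤ w := by
        intro w hw
        obtain ⟨t, ht, htw⟩ := exists_succ_le hw
        have hts : t = s := by
          by_contra hne
          have hsub : ({t, s} : Set F) ⊆ succs x := by
            rintro u (rfl | rfl) <;> assumption
          have hle := Set.ncard_le_ncard hsub (Set.toFinite _)
          rw [Set.ncard_pair hne] at hle
          omega
        exact hts ▸ htw
      have hinv := invariant_one hs.1 hsucc (hmemH _ (isUpperSet_Ici s))
      have : x ∈ Set.Ici s := hinv (Set.mem_Ici.2 le_rfl)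
      exact absurd (Set.mem_Ici.1 this) (not_le_of_gt hs.1)
    · -- condition (ii)
      intro x y hx hy hxy hss
      have key : ∀ {a b : F}, succs a = succs b → Set.Ioi b ⊆ Set.Ioi a := by
        intro a b h w hw
        obtain ⟨t, htb, htw⟩ := exists_succ_le (Set.mem_Ioi.1 hw)
        have hta : t ∈ succs a := h ▸ htb
        exact Set.mem_Ioi.2 (lt_of_lt_of_le hta.1 htw)
      have hIoi : Set.Ioi x = Set.Ioi y := Set.Subset.antisymm (key hss.symm) (key hss)
      have hinv1 := invariant_two hIoi hx hy (hmemH _ (isUpperSet_Ici x))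
      have hinv2 := invariant_two hIoi hx hy (hmemH _ (isUpperSet_Ici y))
      have hxy1 : x ≤ y := Set.mem_Ici.1 (hinv1.1 (Set.mem_Ici.2 le_rfl))
      have hxy2 : y ≤ x := Set.mem_Ici.1 (hinv2.2 (Set.mem_Ici.2 le_rfl))
      exact hxy (le_antisymm hxy1 hxy2)
  · rintro ⟨h1, h2⟩
    ext U
    simp only [Set.mem_setOf_eq]
    constructor
    · exact fun h => hclos_reg_upper h
    · intro hU
      rw [upper_eq_biUnion hU]
      exact hclos_sUnion _ _ (fun a _ => hclos_Ici h1 h2 a)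
end

section
/- Let (X, ≤) be an Esakia space and R the collection of its regular clopen upsets. For all x, y ∈ X and n ∈ ℕ: if x ∼ₙ y, then for every U ∈ Sₙ(R) one has x ∈ U ⟺ y ∈ U. -/
/-- The bounded bisimulation relations `∼ₙ`. -/
def simN {X : Type*} [Preorder X] : ℕ → X → X → Prop
  | 0, x, y => Mset x = Mset y
  | n + 1, x, y =>
      (∀ z, x ≤ z → ∃ w, y ≤ w ∧ simN n z w) ∧
      (∀ w, y ≤ w → ∃ z, x ≤ z ∧ simN n z w)

/-- The least collection containing `B` and closed under binary `∩` and `∪`. -/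
inductive LatClose {X : Type*} (B : Set (Set X)) : Set X → Prop
  | base : ∀ U ∈ B, LatClose B U
  | inter : ∀ {U V}, LatClose B U → LatClose B V → LatClose B (U ∩ V)
  | union : ∀ {U V}, LatClose B U → LatClose B V → LatClose B (U ∪ V)

/-- The rank strata `Sₙ(R)`: `S₀(R)` is generated from `R`, `∅`, `univ` by
`∩`, `∪`; `Sₙ₊₁(R)` is generated from `Sₙ(R)` and all `U ⇨ V` with
`U, V ∈ Sₙ(R)` by `∩`, `∪`. -/
def Strat {X : Type*} [Preorder X] (R : Set (Set X)) : ℕ → Set (Set X)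
  | 0 => {U | LatClose (R ∪ {∅, Set.univ}) U}
  | n + 1 =>
      {U | LatClose
        (Strat R n ∪ {W | ∃ U V, U ∈ Strat R n ∧ V ∈ Strat R n ∧ W = heyImp U V}) U}

theorem my_isClosed_Ici {X : Type*} [TopologicalSpace X] [PartialOrder X]
    (hX : IsEsakia X) (z : X) : IsClosed (Set.Ici z) := by
  rw [← isOpen_compl_iff, isOpen_iff_mem_nhds]
  intro w hw
  obtain ⟨U, hUc, hUup, hzU, hwU⟩ := hX.2.1 z w hw
  exact Filter.mem_of_superset (hUc.1.isOpen_compl.mem_nhds hwU)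
    fun v hv hzv => hv (hUup hzv hzU)

theorem my_exists_maximal {X : Type*} [TopologicalSpace X] [PartialOrder X]
    (hX : IsEsakia X) (x : X) : ∃ m, x ≤ m ∧ ∀ y, m ≤ y → y = m := by
  haveI := hX.1
  obtain ⟨m, hxm, _, hmax⟩ := zorn_le_nonempty₀ (Set.univ : Set X)
    (fun c _ hc y hy => by
      have hne : (⋂ z : c, Set.Ici (z : X)).Nonempty := by
        haveI : Nonempty c := ⟨⟨y, hy⟩⟩
        apply IsCompact.nonempty_iInter_of_directed_nonempty_isCompact_isClosed
        · rintro ⟨a, ha⟩ ⟨b, hb⟩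
          rcases hc.total ha hb with h | h
          · exact ⟨⟨b, hb⟩, Set.Ici_subset_Ici.2 h, le_refl _⟩
          · exact ⟨⟨a, ha⟩, le_refl _, Set.Ici_subset_Ici.2 h⟩
        · exact fun z => ⟨z, le_refl _⟩
        · exact fun z => (my_isClosed_Ici hX z).isCompact
        · exact fun z => my_isClosed_Ici hX z
      obtain ⟨b, hb⟩ := hne
      exact ⟨b, Set.mem_univ b, fun z hz => Set.mem_iInter.1 hb ⟨z, hz⟩⟩)
    x (Set.mem_univ x)
  exact ⟨m, hxm, fun z hz => le_antisymm (hmax (Set.mem_univ z) hz) hz⟩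

theorem my_mem_RCU_iff {X : Type*} [TopologicalSpace X] [PartialOrder X]
    (hX : IsEsakia X) {U : Set X} (hU : IsRCU U) (x : X) :
    x ∈ U ↔ Mset x ⊆ U := by
  constructor
  · intro hx m hm
    exact hU.2.1 hm.1 hx
  · intro h
    rw [hU.2.2]
    intro hmem
    obtain ⟨z, hz, hxz⟩ := hmem
    obtain ⟨m, hzm, hmax⟩ := my_exists_maximal hX z
    exact hz ⟨m, h ⟨hxz.trans hzm, hmax⟩, hzm⟩

theorem my_simN_succ {X : Type*} [PartialOrder X] :
    ∀ (n : ℕ) (x y : X), simN (n + 1) x y → simN n x y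
  | 0, x, y, h => by
    ext m
    constructor
    · rintro ⟨hxm, hmax⟩
      obtain ⟨w, hyw, heq⟩ := h.1 m hxm
      have hm : m ∈ Mset w := heq ▸ (⟨le_refl m, hmax⟩ : m ∈ Mset m)
      exact ⟨hyw.trans hm.1, hmax⟩
    · rintro ⟨hym, hmax⟩
      obtain ⟨z, hxz, heq⟩ := h.2 m hym
      have hm : m ∈ Mset z := heq ▸ (⟨le_refl m, hmax⟩ : m ∈ Mset m)
      exact ⟨hxz.trans hm.1, hmax⟩
  | n + 1, x, y, h =>
    ⟨fun z hz => (h.1 z hz).imp fun w hw => ⟨hw.1, my_simN_succ n z w hw.2⟩,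
     fun w hw => (h.2 w hw).imp fun z hz => ⟨hz.1, my_simN_succ n z w hz.2⟩⟩

theorem my_key {X : Type*} [TopologicalSpace X] [PartialOrder X] (hX : IsEsakia X) :
    ∀ (n : ℕ) (x y : X), simN n x y →
      ∀ U ∈ Strat {V : Set X | IsRCU V} n, (x ∈ U ↔ y ∈ U) := by
  intro n
  induction n with
  | zero =>
    intro x y hsim U hU
    have hU' : LatClose ({V : Set X | IsRCU V} ∪ {∅, Set.univ}) U := hU
    induction hU' with
    | base V hV =>
      rcases hV with hV | hV
      · rw [my_mem_RCU_iff hX hV, my_mem_RCU_iff hX hV, hsim]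
      · rcases hV with rfl | rfl <;> simp
    | inter h1 h2 ih1 ih2 => exact and_congr (ih1 h1) (ih2 h2)
    | union h1 h2 ih1 ih2 => exact or_congr (ih1 h1) (ih2 h2)
  | succ n IH =>
    intro x y hsim U hU
    have hU' : LatClose (Strat {V : Set X | IsRCU V} n ∪
        {W | ∃ A B, A ∈ Strat {V : Set X | IsRCU V} n ∧
          B ∈ Strat {V : Set X | IsRCU V} n ∧ W = heyImp A B}) U := hU
    induction hU' with
    | base V hV =>
      rcases hV with hV | ⟨A, B, hA, hB, rfl⟩
      · exact IH x y (my_simN_succ n x y hsim) V hV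
      · constructor
        · intro hx hmem
          obtain ⟨w, ⟨hwA, hwB⟩, hyw⟩ := hmem
          obtain ⟨z, hxz, hzw⟩ := hsim.2 w hyw
          exact hx ⟨z, ⟨(IH z w hzw A hA).2 hwA, fun hzB => hwB ((IH z w hzw B hB).1 hzB)⟩, hxz⟩
        · intro hy hmem
          obtain ⟨z, ⟨hzA, hzB⟩, hxz⟩ := hmem
          obtain ⟨w, hyw, hzw⟩ := hsim.1 z hxz
          exact hy ⟨w, ⟨(IH z w hzw A hA).1 hzA, fun hwB => hzB ((IH z w hzw B hB).2 hwB)⟩, hyw⟩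
    | inter h1 h2 ih1 ih2 => exact and_congr (ih1 h1) (ih2 h2)
    | union h1 h2 ih1 ih2 => exact or_congr (ih1 h1) (ih2 h2)

/-- in an Esakia space, if `x ∼ₙ y` then `x` and `y` belong to the
same sets of implication rank at most `n` over the regular clopen upsets. -/
theorem stmt7 {X : Type*} [TopologicalSpace X] [PartialOrder X] (hX : IsEsakia X)
    (n : ℕ) (x y : X) (hsim : simN n x y) :
    ∀ U ∈ Strat {V : Set X | IsRCU V} n, (x ∈ U ↔ y ∈ U) :=
  my_key hX n x y hsim
end

section
/- Let F be a finite poset and R the collection of its regular upsets. For all x, y ∈ F and n ∈ ℕ: x ∼ₙ y if and only if for every U ∈ Sₙ(R) one has x ∈ U ⟺ y ∈ U. -/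
section Aux

variable {F : Type*} [Fintype F] [PartialOrder F]

lemma exists_maximal_ge (b : F) : ∃ m, b ≤ m ∧ ∀ y, m ≤ y → y = m := by
  classical
  obtain ⟨m, hm, hmax⟩ := Finset.exists_maximal (s := Finset.univ.filter (b ≤ ·))
    ⟨b, by simp⟩
  have hbm : b ≤ m := (Finset.mem_filter.mp hm).2
  refine ⟨m, hbm, fun y hy => ?_⟩
  exact le_antisymm (hmax (Finset.mem_filter.mpr ⟨Finset.mem_univ _, le_trans hbm hy⟩) hy) hy

lemma mset_anti {x y : F} (h : x ≤ y) : Mset y ⊆ Mset x :=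
  fun m hm => ⟨le_trans h hm.1, hm.2⟩

lemma mem_mset_self_of_mem {x m : F} (h : m ∈ Mset x) : m ∈ Mset m :=
  ⟨le_refl m, h.2⟩

lemma pstar_pstar_eq (U : Set F) : pstar (pstar U) = {a | Mset a ⊆ U} := by
  ext a
  simp only [pstar, dwn, Set.mem_compl_iff, Set.mem_setOf_eq]
  constructor
  · intro h m hm
    by_contra hmU
    exact h ⟨m, fun ⟨c, hc, hmc⟩ => hmU (hm.2 c hmc ▸ hc), hm.1⟩
  · rintro h ⟨b, hb, hab⟩
    obtain ⟨m, hbm, hmax⟩ := exists_maximal_ge b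
    exact hb ⟨m, h ⟨le_trans hab hbm, hmax⟩, hbm⟩

lemma reg_mem_iff {U : Set F} (hU : U ∈ regUps F) (a : F) : a ∈ U ↔ Mset a ⊆ U := by
  conv_lhs => rw [hU.2]
  rw [pstar_pstar_eq]
  rfl

lemma uS_reg (x : F) : {a : F | Mset a ⊆ Mset x} ∈ regUps F := by
  constructor
  · intro a b hab ha
    exact (mset_anti hab).trans ha
  · rw [pstar_pstar_eq]
    ext a
    simp only [Set.mem_setOf_eq]
    constructor
    · intro h m hm k hk
      have hkm : k = m := hm.2 k hk.1
      subst hkm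
      exact h hm
    · intro h m hm
      exact h hm (mem_mset_self_of_mem hm)

lemma simN_refl : ∀ (n : ℕ) (x : F), simN n x x
  | 0, _ => rfl
  | n+1, x => ⟨fun z hz => ⟨z, hz, simN_refl n z⟩, fun z hz => ⟨z, hz, simN_refl n z⟩⟩

lemma simN_mono : ∀ (n : ℕ) {x y : F}, simN (n+1) x y → simN n x y
  | 0, x, y, h => by
      ext m
      constructor
      · intro hm
        obtain ⟨w, hyw, hs⟩ := h.1 m hm.1
        have hmw : m ∈ Mset w := (hs : Mset m = Mset w) ▸ mem_mset_self_of_mem hm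
        exact ⟨le_trans hyw hmw.1, hm.2⟩
      · intro hm
        obtain ⟨z, hxz, hs⟩ := h.2 m hm.1
        have hmz : m ∈ Mset z := (hs : Mset z = Mset m).symm ▸ mem_mset_self_of_mem hm
        exact ⟨le_trans hxz hmz.1, hm.2⟩
  | n+1, x, y, h => by
      constructor
      · intro z hz
        obtain ⟨w, hw, hs⟩ := h.1 z hz
        exact ⟨w, hw, simN_mono n hs⟩
      · intro w hw
        obtain ⟨z, hz, hs⟩ := h.2 w hw
        exact ⟨z, hz, simN_mono n hs⟩

lemma strat_inter {R : Set (Set F)} {n : ℕ} {U V : Set F}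
    (hU : U ∈ Strat R n) (hV : V ∈ Strat R n) : U ∩ V ∈ Strat R n := by
  cases n <;> exact LatClose.inter hU hV

lemma strat_union {R : Set (Set F)} {n : ℕ} {U V : Set F}
    (hU : U ∈ Strat R n) (hV : V ∈ Strat R n) : U ∪ V ∈ Strat R n := by
  cases n <;> exact LatClose.union hU hV

lemma strat_univ (R : Set (Set F)) (n : ℕ) : Set.univ ∈ Strat R n := by
  induction n with
  | zero => exact LatClose.base _ (Or.inr (by simp))
  | succ n ih => exact LatClose.base _ (Or.inl ih)

lemma strat_empty (R : Set (Set F)) (n : ℕ) : (∅ : Set F) ∈ Strat R n := by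
  induction n with
  | zero => exact LatClose.base _ (Or.inr (by simp))
  | succ n ih => exact LatClose.base _ (Or.inl ih)

lemma finset_sInter_mem {R : Set (Set F)} {n : ℕ} (t : Finset (Set F)) :
    (∀ U ∈ t, U ∈ Strat R n) → ⋂₀ (↑t : Set (Set F)) ∈ Strat R n := by
  classical
  induction t using Finset.induction_on with
  | empty => intro _; simpa using strat_univ R n
  | insert _ _ ha ih =>
    intro h
    rw [Finset.coe_insert, Set.sInter_insert]
    exact strat_inter (h _ (Finset.mem_insert_self _ _))
      (ih fun U hU => h U (Finset.mem_insert_of_mem hU))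

lemma finset_sUnion_mem {R : Set (Set F)} {n : ℕ} (t : Finset (Set F)) :
    (∀ U ∈ t, U ∈ Strat R n) → ⋃₀ (↑t : Set (Set F)) ∈ Strat R n := by
  classical
  induction t using Finset.induction_on with
  | empty => intro _; simpa using strat_empty R n
  | insert _ _ ha ih =>
    intro h
    rw [Finset.coe_insert, Set.sUnion_insert]
    exact strat_union (h _ (Finset.mem_insert_self _ _))
      (ih fun U hU => h U (Finset.mem_insert_of_mem hU))

lemma sInter_mem_strat {R : Set (Set F)} {n : ℕ} (S : Set (Set F))
    (hS : ∀ U ∈ S, U ∈ Strat R n) : ⋂₀ S ∈ Strat R n := by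
  have hfin : S.Finite := Set.toFinite S
  have := finset_sInter_mem (R := R) (n := n) hfin.toFinset
    (fun U hU => hS U (hfin.mem_toFinset.mp hU))
  rwa [Set.Finite.coe_toFinset] at this

lemma sUnion_mem_strat {R : Set (Set F)} {n : ℕ} (S : Set (Set F))
    (hS : ∀ U ∈ S, U ∈ Strat R n) : ⋃₀ S ∈ Strat R n := by
  have hfin : S.Finite := Set.toFinite S
  have := finset_sUnion_mem (R := R) (n := n) hfin.toFinset
    (fun U hU => hS U (hfin.mem_toFinset.mp hU))
  rwa [Set.Finite.coe_toFinset] at this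

end Aux

/-- in a finite poset, `x ∼ₙ y` iff `x` and `y` belong to the same
sets of implication rank at most `n` over the regular upsets. -/
theorem stmt8 {F : Type*} [Fintype F] [PartialOrder F] (n : ℕ) (x y : F) :
    simN n x y ↔ ∀ U ∈ Strat (regUps F) n, (x ∈ U ↔ y ∈ U) := by
  induction n generalizing x y with
  | zero =>
    constructor
    · intro h U hU
      have hU' : LatClose (regUps F ∪ {∅, Set.univ}) U := hU
      induction hU' with
      | base V hV =>
        rcases hV with hreg | h01
        · rw [reg_mem_iff hreg x, reg_mem_iff hreg y, (h : Mset x = Mset y)]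
        · rcases h01 with rfl | rfl <;> simp
      | inter hA hB ih1 ih2 =>
        exact and_congr (ih1 hA) (ih2 hB)
      | union hA hB ih1 ih2 =>
        exact or_congr (ih1 hA) (ih2 hB)
    · intro h
      have h1 := h {a | Mset a ⊆ Mset x} (LatClose.base _ (Or.inl (uS_reg x)))
      have h2 := h {a | Mset a ⊆ Mset y} (LatClose.base _ (Or.inl (uS_reg y)))
      have hx : Mset x ⊆ Mset x := subset_rfl
      have hy : Mset y ⊆ Mset y := subset_rfl
      have e1 : Mset y ⊆ Mset x := h1.mp hx
      have e2 : Mset x ⊆ Mset y := h2.mpr hy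
      exact Set.Subset.antisymm e2 e1
  | succ n IH =>
    constructor
    · intro h U hU
      have hU' : LatClose (Strat (regUps F) n ∪
          {W | ∃ A B, A ∈ Strat (regUps F) n ∧ B ∈ Strat (regUps F) n ∧ W = heyImp A B}) U := hU
      induction hU' with
      | base V hV =>
        rcases hV with hV | ⟨A, B, hA, hB, rfl⟩
        · exact (IH x y).mp (simN_mono n h) V hV
        · constructor
          · intro hx hyd
            obtain ⟨t, ht, hyt⟩ := hyd
            obtain ⟨z, hxz, hs⟩ := h.2 t hyt
            have hagree := (IH z t).mp hs
            have hzAB : z ∈ A \ B :=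
              ⟨(hagree A hA).mpr ht.1, fun hzB => ht.2 ((hagree B hB).mp hzB)⟩
            exact hx ⟨z, hzAB, hxz⟩
          · intro hy hxd
            obtain ⟨z, hz, hxz⟩ := hxd
            obtain ⟨w, hyw, hs⟩ := h.1 z hxz
            have hagree := (IH z w).mp hs
            have hwAB : w ∈ A \ B :=
              ⟨(hagree A hA).mp hz.1, fun hwB => hz.2 ((hagree B hB).mpr hwB)⟩
            exact hy ⟨w, hwAB, hyw⟩
      | inter hA hB ih1 ih2 =>
        exact and_congr (ih1 hA) (ih2 hB)
      | union hA hB ih1 ih2 =>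
        exact or_congr (ih1 hA) (ih2 hB)
    · intro h
      constructor
      · intro z hz
        set Uz : Set F := ⋂₀ {D | D ∈ Strat (regUps F) n ∧ z ∈ D} with hUzdef
        set Vz : Set F := ⋃₀ {D | D ∈ Strat (regUps F) n ∧ z ∉ D} with hVzdef
        have hUz : Uz ∈ Strat (regUps F) n :=
          sInter_mem_strat _ (fun U hU => hU.1)
        have hVz : Vz ∈ Strat (regUps F) n :=
          sUnion_mem_strat _ (fun U hU => hU.1)
        have hW : heyImp Uz Vz ∈ Strat (regUps F) (n + 1) :=
          LatClose.base _ (Or.inr ⟨Uz, Vz, hUz, hVz, rfl⟩)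
        have hzUz : z ∈ Uz := fun D hD => hD.2
        have hzVz : z ∉ Vz := by
          rintro ⟨D, hD, hzD⟩
          exact hD.2 hzD
        have hxW : x ∉ heyImp Uz Vz := fun hx => hx ⟨z, ⟨hzUz, hzVz⟩, hz⟩
        have hyW : y ∉ heyImp Uz Vz := fun hy => hxW ((h _ hW).mpr hy)
        have hyd : y ∈ dwn (Uz \ Vz) := Set.not_notMem.mp hyW
        obtain ⟨t, ⟨htU, htV⟩, hyt⟩ := hyd
        refine ⟨t, hyt, (IH z t).mpr fun D hD => ?_⟩
        constructor
        · intro hzD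
          exact htU D ⟨hD, hzD⟩
        · intro htD
          by_contra hzD
          exact htV ⟨D, ⟨hD, hzD⟩, htD⟩
      · intro w hw
        set Uw : Set F := ⋂₀ {D | D ∈ Strat (regUps F) n ∧ w ∈ D} with hUwdef
        set Vw : Set F := ⋃₀ {D | D ∈ Strat (regUps F) n ∧ w ∉ D} with hVwdef
        have hUw : Uw ∈ Strat (regUps F) n :=
          sInter_mem_strat _ (fun U hU => hU.1)
        have hVw : Vw ∈ Strat (regUps F) n :=
          sUnion_mem_strat _ (fun U hU => hU.1)
        have hW : heyImp Uw Vw ∈ Strat (regUps F) (n + 1) :=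
          LatClose.base _ (Or.inr ⟨Uw, Vw, hUw, hVw, rfl⟩)
        have hwUw : w ∈ Uw := fun D hD => hD.2
        have hwVw : w ∉ Vw := by
          rintro ⟨D, hD, hwD⟩
          exact hD.2 hwD
        have hyW : y ∉ heyImp Uw Vw := fun hy => hy ⟨w, ⟨hwUw, hwVw⟩, hw⟩
        have hxW : x ∉ heyImp Uw Vw := fun hx => hyW ((h _ hW).mp hx)
        have hxd : x ∈ dwn (Uw \ Vw) := Set.not_notMem.mp hxW
        obtain ⟨t, ⟨htU, htV⟩, hxt⟩ := hxd
        refine ⟨t, hxt, (IH t w).mpr fun D hD => ?_⟩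
        constructor
        · intro htD
          by_contra hwD
          exact htV ⟨D, ⟨hD, hwD⟩, htD⟩
        · intro hwD
          exact htU D ⟨hD, hwD⟩
end

section
/- Let (X, ≤) be an Esakia space such that every clopen upset of X belongs to the Heyting closure ⟨R⟩ of the collection R of regular clopen upsets of X. Then the relation ∼∞ on X is the equality relation: for all x, y ∈ X, x ∼∞ y implies x = y. -/
/-- `x ∼∞ y` iff `x ∼ₙ y` for all `n`. -/
def simInf {X : Type*} [Preorder X] (x y : X) : Prop := ∀ n : ℕ, simN n x y

section Aux
variable {X : Type*} [TopologicalSpace X] [PartialOrder X]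

lemma simN_succ_mono : ∀ (n : ℕ) (x y : X), simN (n+1) x y → simN n x y := by
  intro n
  induction n with
  | zero =>
    intro x y h
    have sub : ∀ a b : X, (∀ z, a ≤ z → ∃ w, b ≤ w ∧ simN 0 z w) → Mset a ⊆ Mset b := by
      intro a b hab m hm
      obtain ⟨w, hbw, h0⟩ := hab m hm.1
      have : m ∈ Mset m := ⟨le_refl m, hm.2⟩
      rw [h0] at this
      exact ⟨hbw.trans this.1, this.2⟩
    exact Set.Subset.antisymm (sub x y h.1)
      (sub y x fun z hz => (h.2 z hz).imp fun w hw => ⟨hw.1, hw.2.symm⟩)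
  | succ n ih =>
    intro x y h
    constructor
    · intro z hz; obtain ⟨w, hw, hs⟩ := h.1 z hz; exact ⟨w, hw, ih _ _ hs⟩
    · intro w hw; obtain ⟨z, hz, hs⟩ := h.2 w hw; exact ⟨z, hz, ih _ _ hs⟩

lemma simN_mono_s10 {m n : ℕ} (h : m ≤ n) {x y : X} (hs : simN n x y) : simN m x y := by
  induction n with
  | zero => rwa [Nat.le_zero.1 h]
  | succ n ih =>
    rcases Nat.lt_or_ge m (n+1) with h' | h'
    · exact ih (by omega) (simN_succ_mono n x y hs)
    · have : m = n + 1 := le_antisymm h h'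
      rwa [this]

lemma simN_symm : ∀ (n : ℕ) (x y : X), simN n x y → simN n y x := by
  intro n
  induction n with
  | zero => exact fun x y h => h.symm
  | succ n ih =>
    intro x y h
    exact ⟨fun w hw => (h.2 w hw).imp fun z hz => ⟨hz.1, ih _ _ hz.2⟩,
      fun z hz => (h.1 z hz).imp fun w hw => ⟨hw.1, ih _ _ hw.2⟩⟩

lemma upperClosed (hX : IsEsakia X) (c : X) : IsClosed {z : X | c ≤ z} := by
  rw [← isOpen_compl_iff, isOpen_iff_mem_nhds]
  intro z hz
  obtain ⟨U, hUc, hUu, hcU, hzU⟩ := hX.2.1 c z hz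
  exact Filter.mem_of_superset (hUc.compl.isOpen.mem_nhds hzU)
    (fun w hw hcw => hw (hUu hcw hcU))

lemma exists_maximal (hX : IsEsakia X) (x : X) : ∃ m, x ≤ m ∧ m ∈ Mset x := by
  have := hX.1
  have H : ∀ c ⊆ Set.Ici x, IsChain (· ≤ ·) c → ∀ y ∈ c, ∃ ub, ∀ z ∈ c, z ≤ ub := by
    intro c hc hchain y hy
    have hne : Nonempty c := ⟨⟨y, hy⟩⟩
    have hInter : (⋂ i : c, {z : X | (i : X) ≤ z}).Nonempty := by
      apply IsCompact.nonempty_iInter_of_directed_nonempty_isCompact_isClosed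
      · rintro ⟨a, ha⟩ ⟨b, hb⟩
        rcases hchain.total ha hb with h | h
        · exact ⟨⟨b, hb⟩, fun z hz => h.trans hz, fun z hz => hz⟩
        · exact ⟨⟨a, ha⟩, fun z hz => hz, fun z hz => h.trans hz⟩
      · exact fun i => ⟨i, le_rfl⟩
      · exact fun i => (upperClosed hX (i : X)).isCompact
      · exact fun i => upperClosed hX (i : X)
    obtain ⟨ub, hub⟩ := hInter
    exact ⟨ub, fun z hz => Set.mem_iInter.1 hub ⟨z, hz⟩⟩
  obtain ⟨m, hxm, hmax⟩ := zorn_le_nonempty_Ici₀ x H x le_rfl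
  exact ⟨m, hxm, hxm, fun z hz => le_antisymm (hmax hz) hz⟩

lemma rcu_iff (hX : IsEsakia X) {U : Set X} (hU : IsRCU U) (x : X) :
    x ∈ U ↔ Mset x ⊆ U := by
  constructor
  · intro hx m hm; exact hU.2.1 hm.1 hx
  · intro hM
    rw [hU.2.2]
    intro ⟨y, hy, hxy⟩
    obtain ⟨m, hym, hmM⟩ := exists_maximal hX y
    exact hy ⟨m, hM ⟨hxy.trans hmM.1, hmM.2⟩, hym⟩

lemma hclos_inv (hX : IsEsakia X) {U : Set X} (h : HClos {V : Set X | IsRCU V} U) :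
    ∃ n : ℕ, ∀ x y : X, simN n x y → (x ∈ U ↔ y ∈ U) := by
  induction h with
  | base U hU =>
    refine ⟨0, fun x y hs => ?_⟩
    rw [rcu_iff hX hU, rcu_iff hX hU, show Mset x = Mset y from hs]
  | bot => exact ⟨0, fun x y _ => Iff.rfl⟩
  | top => exact ⟨0, fun x y _ => Iff.rfl⟩
  | inter hU hV ihU ihV =>
    obtain ⟨n, hn⟩ := ihU; obtain ⟨m, hm⟩ := ihV
    refine ⟨max n m, fun x y hs => ?_⟩
    rw [Set.mem_inter_iff, Set.mem_inter_iff,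
      hn x y (simN_mono_s10 (le_max_left n m) hs), hm x y (simN_mono_s10 (le_max_right n m) hs)]
  | union hU hV ihU ihV =>
    obtain ⟨n, hn⟩ := ihU; obtain ⟨m, hm⟩ := ihV
    refine ⟨max n m, fun x y hs => ?_⟩
    rw [Set.mem_union, Set.mem_union,
      hn x y (simN_mono_s10 (le_max_left n m) hs), hm x y (simN_mono_s10 (le_max_right n m) hs)]
  | @imp U V hU hV ihU ihV =>
    obtain ⟨n, hn⟩ := ihU; obtain ⟨m, hm⟩ := ihV
    refine ⟨max n m + 1, fun x y hs => ?_⟩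
    constructor
    · intro hx ⟨w, hw, hyw⟩
      obtain ⟨z, hxz, hzw⟩ := hs.2 w hyw
      exact hx ⟨z, ⟨(hn z w (simN_mono_s10 (le_max_left n m) hzw)).2 hw.1,
        fun hzV => hw.2 ((hm z w (simN_mono_s10 (le_max_right n m) hzw)).1 hzV)⟩, hxz⟩
    · intro hy ⟨z, hz, hxz⟩
      obtain ⟨w, hyw, hzw⟩ := hs.1 z hxz
      exact hy ⟨w, ⟨(hn z w (simN_mono_s10 (le_max_left n m) hzw)).1 hz.1,
        fun hwV => hz.2 ((hm z w (simN_mono_s10 (le_max_right n m) hzw)).2 hwV)⟩, hyw⟩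

end Aux

/-- if every clopen upset of an Esakia space lies in the Heyting
closure of the regular clopen upsets, then `∼∞` is the equality relation. -/
theorem stmt10 {X : Type*} [TopologicalSpace X] [PartialOrder X] (hX : IsEsakia X)
    (hreg : ∀ U : Set X, IsClopen U → IsUpperSet U → HClos {V : Set X | IsRCU V} U) :
    ∀ x y : X, simInf x y → x = y := by
  intro x y hxy
  by_contra hne
  have key : ∀ a b : X, simInf a b → ¬ a ≤ b → False := by
    intro a b hab hle
    obtain ⟨U, hUc, hUu, haU, hbU⟩ := hX.2.1 a b hle
    obtain ⟨n, hn⟩ := hclos_inv hX (hreg U hUc hUu)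
    exact hbU ((hn a b (hab n)).1 haU)
  rcases Classical.em (x ≤ y) with h | h
  · rcases Classical.em (y ≤ x) with h' | h'
    · exact hne (le_antisymm h h')
    · exact key y x (fun n => simN_symm n x y (hxy n)) h'
  · exact key x y hxy h
end
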